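/- arXiv:1403.2509 — 2 statements merged into one kernel-verified Lean document; each statement's English description precedes it below -/
import Mathlib

section
/- For odd n ≥ 3, ⟨e_j, ω_i⟩ = 0 if and only if i ≡ j + (n+1)/2 (mod n) or i ≡ j + (n−1)/2 (mod n), and ⟨e_j, ω_i⟩ = 1 if and only if i ≡ j (mod n). -/
open Real

noncomputable def rn (n : ℕ) : ℝ := Real.sqrt (1 / Real.cos (π / n))

noncomputable def ωst (n : ℕ) (i : ℤ) : Fin 3 → ℝ :=
  ![rn n * Real.cos (2 * π * (i : ℝ) / n), rn n * Real.sin (2 * π * (i : ℝ) / n), 1]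

noncomputable def eEv (n : ℕ) (j : ℤ) : Fin 3 → ℝ :=
  ![rn n * Real.cos ((2 * (j : ℝ) - 1) * π / n) / 2,
    rn n * Real.sin ((2 * (j : ℝ) - 1) * π / n) / 2, 1 / 2]

noncomputable def eOd (n : ℕ) (j : ℤ) : Fin 3 → ℝ :=
  (1 / (1 + rn n ^ 2)) •
    ![rn n * Real.cos (2 * π * (j : ℝ) / n), rn n * Real.sin (2 * π * (j : ℝ) / n), 1]

noncomputable def ip (v w : Fin 3 → ℝ) : ℝ := v 0 * w 0 + v 1 * w 1 + v 2 * w 2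

noncomputable def uE : Fin 3 → ℝ := ![0, 0, 1]

/-!
With `r² = sec (π / n)`, `⟨e_j, ω_i⟩ = (r² cos (2π(i - j)/n) + 1) / (1 + r²)`. It equals `1` exactly
when `cos (2π(i - j)/n) = 1`, and vanishes exactly when `cos (2π(i - j)/n) = -cos (π/n)`, which for
`n = 2q + 1` is `cos (2πq/n)`. Two angles `2πx/n`, `2πy/n` have the same cosine iff `x ≡ ±y (mod n)`,
and `-q ≡ q + 1 (mod n)`.
-/

theorem cos_two_pi_mul_div_eq_cos_iff {n : ℕ} (hn : n ≠ 0) (x y : ℤ) :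
    cos (2 * π * x / n) = cos (2 * π * y / n) ↔ x ≡ y [ZMOD n] ∨ x ≡ -y [ZMOD n] := by
  have hn' : (n : ℝ) ≠ 0 := Nat.cast_ne_zero.2 hn
  have rescale : ∀ k u v : ℤ,
      2 * π * u / n = 2 * k * π + 2 * π * v / n ↔ u = v + n * k := by
    intro k u v
    rw [show 2 * k * π + 2 * π * v / n = 2 * π / n * (v + n * k) by field_simp; ring,
      mul_div_right_comm, mul_right_inj' (div_ne_zero two_pi_pos.ne' hn')]
    norm_cast
  have neg_x : ∀ k : ℤ, 2 * k * π - 2 * π * x / n = 2 * k * π + 2 * π * (-x : ℤ) / n := by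
    intro k; push_cast; ring
  have modEq_neg : x ≡ -y [ZMOD n] ↔ -x ≡ y [ZMOD n] := by rw [← Int.neg_modEq_neg, neg_neg]
  rw [cos_eq_cos_iff, exists_or, modEq_neg, Int.modEq_iff_add_fac, Int.modEq_iff_add_fac]
  simp only [neg_x, rescale]

theorem Int.sub_modEq_iff_modEq_add {n a b c : ℤ} : a - b ≡ c [ZMOD n] ↔ a ≡ b + c [ZMOD n] := by
  simp only [Int.modEq_iff_dvd]
  ring_nf

theorem cos_pi_div_pos {n : ℕ} (hn : 3 ≤ n) : 0 < cos (π / n) := by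
  have hn' : (2 : ℝ) < n := by exact_mod_cast hn
  apply cos_pos_of_mem_Ioo
  constructor
  · linarith [div_pos pi_pos (by linarith : (0 : ℝ) < n), pi_pos]
  · exact div_lt_div_of_pos_left pi_pos two_pos hn'

theorem rn_sq {n : ℕ} (hn : 3 ≤ n) : rn n ^ 2 = (cos (π / n))⁻¹ := by
  rw [rn, one_div, sq_sqrt (inv_nonneg.2 (cos_pi_div_pos hn).le)]

theorem ip_eOd_ωst (n : ℕ) (i j : ℤ) :
    ip (eOd n j) (ωst n i) = (rn n ^ 2 * cos (2 * π * (i - j : ℤ) / n) + 1) / (1 + rn n ^ 2) := by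
  rw [Int.cast_sub, mul_sub, sub_div, cos_sub]
  simp only [ip, eOd, ωst, Pi.smul_apply, Matrix.cons_val_zero, Matrix.cons_val_one,
    Matrix.cons_val_two, Matrix.head_cons, Matrix.tail_cons, smul_eq_mul]
  ring

theorem ip_eOd_ωst_eq_one_iff {n : ℕ} (hn : 3 ≤ n) (i j : ℤ) :
    ip (eOd n j) (ωst n i) = 1 ↔ i ≡ j [ZMOD n] := by
  have hr : 0 < rn n ^ 2 := by rw [rn_sq hn]; exact inv_pos.2 (cos_pi_div_pos hn)
  rw [ip_eOd_ωst, div_eq_one_iff_eq (by positivity), add_comm, add_right_inj,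
    mul_eq_left₀ hr.ne', show (1 : ℝ) = cos (2 * π * (0 : ℤ) / n) by simp,
    cos_two_pi_mul_div_eq_cos_iff (by omega), neg_zero, or_self, Int.sub_modEq_iff_modEq_add,
    add_zero]

theorem neg_cos_pi_div_eq_cos {n q : ℕ} (hq : n = 2 * q + 1) :
    -cos (π / n) = cos (2 * π * (q : ℤ) / n) := by
  rw [← cos_pi_sub]
  congr 1
  subst hq
  push_cast
  field_simp
  ring

theorem ip_eOd_ωst_eq_zero_iff {n q : ℕ} (hq : n = 2 * q + 1) (hn : 3 ≤ n) (i j : ℤ) :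
    ip (eOd n j) (ωst n i) = 0 ↔ i ≡ j + q [ZMOD n] ∨ i ≡ j + (q + 1) [ZMOD n] := by
  have hc := cos_pi_div_pos hn
  have hr : 0 < rn n ^ 2 := by rw [rn_sq hn]; exact inv_pos.2 hc
  rw [ip_eOd_ωst, div_eq_zero_iff, or_iff_left (by positivity), rn_sq hn, add_eq_zero_iff_eq_neg,
    inv_mul_eq_iff_eq_mul₀ hc.ne', mul_neg_one, neg_cos_pi_div_eq_cos hq,
    cos_two_pi_mul_div_eq_cos_iff (by omega), Int.sub_modEq_iff_modEq_add,
    Int.sub_modEq_iff_modEq_add, show j + -(q : ℤ) = j + (q + 1) - n by omega,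
    Int.modEq_sub_modulus_iff]

theorem ngon_odd_saturation (n : ℕ) (hn : Odd n) (h3 : 3 ≤ n) (i j : ℤ) :
    (ip (eOd n j) (ωst n i) = 0 ↔
      (i ≡ j + ((n : ℤ) + 1) / 2 [ZMOD (n : ℤ)] ∨ i ≡ j + ((n : ℤ) - 1) / 2 [ZMOD (n : ℤ)])) ∧
    (ip (eOd n j) (ωst n i) = 1 ↔ i ≡ j [ZMOD (n : ℤ)]) := by
  obtain ⟨q, hq⟩ := hn
  rw [show ((n : ℤ) + 1) / 2 = q + 1 by omega, show ((n : ℤ) - 1) / 2 = q by omega, or_comm]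
  exact ⟨ip_eOd_ωst_eq_zero_iff hq h3 i j, ip_eOd_ωst_eq_one_iff h3 i j⟩
end

section
/- For even n ≥ 4, the dual cone of the cone generated by the extremal states {ω_i : 0 ≤ i < n} equals the cone generated by the extremal effects {e_j : 0 ≤ j < n}; moreover this dual cone equals the state cone rotated about the z-axis by angle π/n (weak self-duality). -/
open Real

noncomputable def dualCone (C : Set (Fin 3 → ℝ)) : Set (Fin 3 → ℝ) :=
  {f | ∀ v ∈ C, 0 ≤ ip f v}

noncomputable def stateCone (n : ℕ) : Set (Fin 3 → ℝ) :=
  {v | ∃ c : Fin n → ℝ, (∀ i, 0 ≤ c i) ∧ v = ∑ i, c i • ωst n ((i : ℕ) : ℤ)}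

noncomputable def effectConeEv (n : ℕ) : Set (Fin 3 → ℝ) :=
  {f | ∃ c : Fin n → ℝ, (∀ j, 0 ≤ c j) ∧ f = ∑ j, c j • eEv n ((j : ℕ) : ℤ)}

noncomputable def rotZ (θ : ℝ) (v : Fin 3 → ℝ) : Fin 3 → ℝ :=
  ![Real.cos θ * v 0 - Real.sin θ * v 1, Real.sin θ * v 0 + Real.cos θ * v 1, v 2]

/-! For the generators, `⟨e_j, ω_i⟩ = (r² cos ((2(j - i) - 1)π/n) + 1)/2`. When `n` is even,
the odd multiples of `π/n` keep a distance at least `π/n` from `π` modulo `2π`, so this is at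
least `(1 - r² cos (π/n))/2 = 0`: the effects lie in the dual cone.

Conversely, let `f` be in the dual cone and let `ω_j` be a state on which `f` is largest.
Comparing with `ω_{j ± 1}` shows that the horizontal part of `f` lies in the angular sector
spanned by the horizontal parts of `e_j` and `e_{j+1}`; what remains of `f` is a multiple of
`(0, 0, 1) = e_j + e_{j+m}` (with `n = 2m`), nonnegative because `f` is nonnegative on the
antipodal state `ω_{j+m}`.

Finally, the rotation by `π/n` maps `ω_i` to `2 e_{i+1}`. -/

open Set

theorem setOf_nonneg_combination_eq_hull {ι E : Type*} [Fintype ι] [AddCommGroup E] [Module ℝ E]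
    (v : ι → E) :
    {x | ∃ c : ι → ℝ, (∀ i, 0 ≤ c i) ∧ x = ∑ i, c i • v i} =
      (PointedCone.hull ℝ (range v) : Set E) := by
  ext x
  change _ ↔ x ∈ Submodule.span _ _
  rw [Submodule.mem_span_range_iff_exists_fun]
  constructor
  · rintro ⟨c, hc, rfl⟩
    exact ⟨fun i => ⟨c i, hc i⟩, rfl⟩
  · rintro ⟨c, rfl⟩
    exact ⟨fun i => c i, fun i => (c i).2, rfl⟩

theorem Function.Periodic.range_fin_eq {α : Type*} {f : ℤ → α} {n : ℕ}
    (hf : Function.Periodic f n) (hn : 0 < n) : range (fun i : Fin n => f i) = range f := by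
  refine (range_comp_subset_range _ f).antisymm ?_
  rintro _ ⟨k, rfl⟩
  obtain ⟨y, ⟨hy0, hyn⟩, hy⟩ := hf.exists_mem_Ico₀ (by exact_mod_cast hn) k
  refine ⟨⟨y.toNat, by omega⟩, ?_⟩
  simp [hy, Int.toNat_of_nonneg hy0]

theorem Function.Periodic.exists_max {α : Type*} [LinearOrder α] {f : ℤ → α} {n : ℕ}
    (hf : Function.Periodic f n) (hn : 0 < n) : ∃ j, ∀ k, f k ≤ f j := by
  have : Nonempty (Fin n) := ⟨⟨0, hn⟩⟩
  obtain ⟨i, hi⟩ := Finite.exists_max (fun i : Fin n => f i)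
  refine ⟨i, fun k => ?_⟩
  obtain ⟨i', hi'⟩ : f k ∈ range (fun i : Fin n => f i) :=
    hf.range_fin_eq hn ▸ mem_range_self k
  exact hi' ▸ hi i'

theorem neg_cos_pi_div_le_cos_int_mul_pi_div {n : ℕ} (hn : 0 < n) {l : ℤ}
    (hl : ¬ (2 * n : ℤ) ∣ l + n) : -cos (π / n) ≤ cos (l * π / n) := by
  set q := (l + n) / (2 * n)
  -- `l ≡ r [ZMOD 2n]` with `-n < r < n`; the residue `r = -n` is the one excluded by `hl`.
  set r := (l + n) % (2 * n) - n
  have hr_lo : -n < r := by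
    have : (l + n) % (2 * n) ≠ 0 := fun h => hl (Int.dvd_of_emod_eq_zero h)
    have := Int.emod_nonneg (l + n) (by omega : (2 * n : ℤ) ≠ 0)
    omega
  have hr_hi : r < n := by
    have := Int.emod_lt_of_pos (l + n) (by omega : (0 : ℤ) < 2 * n)
    omega
  have hrabs : ((|r| : ℤ) : ℝ) ≤ n - 1 := by
    have : |r| ≤ (n : ℤ) - 1 := abs_le.2 ⟨by omega, by omega⟩
    exact_mod_cast this
  have hl_eq : (l : ℝ) * π / n = r * π / n + q * (2 * π) := by
    have : l = r + q * (2 * n) := by have := Int.emod_add_mul_ediv (l + n) (2 * n); linarith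
    rw [this]; push_cast; field_simp
  rw [hl_eq, cos_add_int_mul_two_pi, ← cos_abs (r * π / n), abs_div, abs_mul, abs_of_pos pi_pos,
    Nat.abs_cast, ← Int.cast_abs, ← cos_pi_sub]
  apply cos_le_cos_of_nonneg_of_le_pi (by positivity) (sub_le_self _ (by positivity))
  rw [show π - π / n = (n - 1) * π / n by field_simp]
  gcongr

theorem exists_nonneg_sector_decomposition {x y A p : ℝ} (hp₀ : 0 < p) (hp : p < π / 2)
    (hplus : x * cos (A + 2 * p) + y * sin (A + 2 * p) ≤ x * cos A + y * sin A)
    (hminus : x * cos (A - 2 * p) + y * sin (A - 2 * p) ≤ x * cos A + y * sin A) :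
    ∃ a b : ℝ, 0 ≤ a ∧ 0 ≤ b ∧ x = a * cos (A - p) + b * cos (A + p) ∧
      y = a * sin (A - p) + b * sin (A + p) ∧ (a + b) * cos p = x * cos A + y * sin A := by
  have hS : 0 < sin p := sin_pos_of_pos_of_lt_pi hp₀ (by linarith [pi_pos])
  have hC : 0 < cos p := cos_pos_of_mem_Ioo ⟨by linarith, hp⟩
  have hA := sin_sq_add_cos_sq A
  have hP := sin_sq_add_cos_sq p
  set a := x * sin (A + p) - y * cos (A + p)
  set b := y * cos (A - p) - x * sin (A - p)
  have ha :
      x * cos A + y * sin A - (x * cos (A + 2 * p) + y * sin (A + 2 * p)) = 2 * sin p * a := by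
    simp only [a, cos_add, sin_add, cos_two_mul, sin_two_mul]
    linear_combination (-2 * (x * cos A + y * sin A)) * hP
  have hb :
      x * cos A + y * sin A - (x * cos (A - 2 * p) + y * sin (A - 2 * p)) = 2 * sin p * b := by
    simp only [b, cos_sub, sin_sub, cos_two_mul, sin_two_mul]
    linear_combination (-2 * (x * cos A + y * sin A)) * hP
  refine ⟨a / (2 * sin p * cos p), b / (2 * sin p * cos p), ?_, ?_, ?_, ?_, ?_⟩
  · have : 0 ≤ a := nonneg_of_mul_nonneg_right (ha ▸ sub_nonneg.2 hplus) (by positivity)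
    positivity
  · have : 0 ≤ b := nonneg_of_mul_nonneg_right (hb ▸ sub_nonneg.2 hminus) (by positivity)
    positivity
  · field_simp
    simp only [a, b, cos_add, sin_add, cos_sub, sin_sub]
    linear_combination (-2 * sin p * cos p * x) * hA
  · field_simp
    simp only [a, b, cos_add, sin_add, cos_sub, sin_sub]
    linear_combination (-2 * sin p * cos p * y) * hA
  · field_simp
    simp only [a, b, cos_add, sin_add, cos_sub, sin_sub]
    ring

section Polygon

variable {n : ℕ}

theorem rn_sq_mul_cos_pi_div (hn : 2 < n) : rn n ^ 2 * cos (π / n) = 1 := by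
  have : 0 < cos (π / n) := by
    apply cos_pos_of_mem_Ioo ⟨by linarith [pi_pos, show 0 < π / n by positivity], ?_⟩
    rw [div_lt_div_iff_of_pos_left pi_pos (by positivity) two_pos]
    exact_mod_cast hn
  rw [rn, sq_sqrt (by positivity)]
  field_simp

theorem rn_pos (hn : 2 < n) : 0 < rn n := by
  have h := rn_sq_mul_cos_pi_div hn
  have h0 : rn n ≠ 0 := by rintro h0; simp [h0] at h
  exact (sqrt_nonneg _).lt_of_ne h0.symm

theorem ωst_periodic (hn : n ≠ 0) : Function.Periodic (ωst n) n := by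
  intro k
  have : 2 * π * ((k + n : ℤ) : ℝ) / n = 2 * π * k / n + (1 : ℤ) * (2 * π) := by
    push_cast; field_simp
  simp only [ωst, this, cos_add_int_mul_two_pi, sin_add_int_mul_two_pi]

theorem eEv_periodic (hn : n ≠ 0) : Function.Periodic (eEv n) n := by
  intro k
  have :
      (2 * ((k + n : ℤ) : ℝ) - 1) * π / n = (2 * k - 1) * π / n + (1 : ℤ) * (2 * π) := by
    push_cast; field_simp; ring
  simp only [eEv, this, cos_add_int_mul_two_pi, sin_add_int_mul_two_pi]

theorem stateCone_eq_hull (hn : 0 < n) :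
    stateCone n = PointedCone.hull ℝ (range (ωst n)) := by
  rw [stateCone, setOf_nonneg_combination_eq_hull, (ωst_periodic hn.ne').range_fin_eq hn]

theorem effectConeEv_eq_hull (hn : 0 < n) :
    effectConeEv n = PointedCone.hull ℝ (range (eEv n)) := by
  rw [effectConeEv, setOf_nonneg_combination_eq_hull, (eEv_periodic hn.ne').range_fin_eq hn]

theorem dotProduct_eq_ip (v f : Fin 3 → ℝ) : v ⬝ᵥ f = ip f v := by
  simp [ip, dotProduct, Fin.sum_univ_three, mul_comm]

theorem dualCone_eq_dual (C : Set (Fin 3 → ℝ)) :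
    dualCone C = PointedCone.dual (dotProductBilin ℝ ℝ) C := by
  ext f
  simp [dualCone, dotProduct_eq_ip]

theorem ip_eEv_ωst (j i : ℤ) :
    ip (eEv n j) (ωst n i) = (rn n ^ 2 * cos ((2 * (j - i) - 1) * π / n) + 1) / 2 := by
  have : (2 * (j - i) - 1) * π / n = (2 * j - 1) * π / n - 2 * π * i / n := by ring
  simp only [ip, eEv, ωst, this, cos_sub, one_div, mul_one, Fin.isValue,
    Matrix.cons_val_zero, Matrix.cons_val_one, Matrix.cons_val]
  ring

theorem ip_eEv_ωst_nonneg (hn : Even n) (h2 : 2 < n) (j i : ℤ) :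
    0 ≤ ip (eEv n j) (ωst n i) := by
  have hl : ¬ (2 * n : ℤ) ∣ (2 * (j - i) - 1) + n := by
    obtain ⟨m, rfl⟩ := hn
    intro h
    have := (dvd_mul_right 2 _).trans h
    push_cast at this
    omega
  have := neg_cos_pi_div_le_cos_int_mul_pi_div (by omega) hl
  push_cast at this
  rw [ip_eEv_ωst]
  linarith [mul_le_mul_of_nonneg_left this (sq_nonneg (rn n)), rn_sq_mul_cos_pi_div h2]

theorem ip_ωst (f : Fin 3 → ℝ) (k : ℤ) :
    ip f (ωst n k) = rn n * (f 0 * cos (2 * π * k / n) + f 1 * sin (2 * π * k / n)) + f 2 := by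
  simp only [ip, ωst, mul_one, Fin.isValue, Matrix.cons_val_zero, Matrix.cons_val_one,
    Matrix.cons_val]
  ring

theorem eEv_add_eEv_add_half {m : ℕ} (hm : n = m + m) (hm0 : m ≠ 0) (k : ℤ) :
    eEv n k + eEv n (k + m) = uE := by
  have : (2 * ((k + m : ℤ) : ℝ) - 1) * π / n = (2 * k - 1) * π / n + π := by
    rw [hm]; push_cast; field_simp; ring
  simp only [eEv, uE, this, cos_add_pi, sin_add_pi]
  ext i
  fin_cases i <;>
    simp only [Pi.add_apply, one_div, mul_neg, Fin.zero_eta, Fin.mk_one, Fin.reduceFinMk,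
      Matrix.cons_val] <;>
    ring

theorem eq_smul_eEv_add_smul_eEv_add_smul_uE (h2 : 2 < n) {f : Fin 3 → ℝ} {j : ℤ} {a b : ℝ}
    (hx : f 0 = a * cos (2 * π * j / n - π / n) + b * cos (2 * π * j / n + π / n))
    (hy : f 1 = a * sin (2 * π * j / n - π / n) + b * sin (2 * π * j / n + π / n))
    (hab : (a + b) * cos (π / n) = f 0 * cos (2 * π * j / n) + f 1 * sin (2 * π * j / n)) :
    f = (2 * a / rn n) • eEv n j + (2 * b / rn n) • eEv n (j + 1) +
      (f 2 - rn n * (f 0 * cos (2 * π * j / n) + f 1 * sin (2 * π * j / n))) • uE := by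
  have hr := (rn_pos h2).ne'
  have hθ : (2 * (j : ℝ) - 1) * π / n = 2 * π * j / n - π / n := by ring
  have hθ' : (2 * ((j : ℝ) + 1) - 1) * π / n = 2 * π * j / n + π / n := by ring
  simp only [eEv, uE, one_div, Int.cast_add, Int.cast_one, hθ, hθ', Matrix.smul_cons, smul_eq_mul,
    Matrix.smul_empty, Matrix.add_cons, Matrix.head_cons, Matrix.tail_cons, Matrix.empty_add_empty,
    mul_zero, mul_one, add_zero]
  ext i
  fin_cases i
  · simp only [hx, Fin.zero_eta, Matrix.cons_val_zero]
    field_simp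
  · simp only [hy, Fin.mk_one, Matrix.cons_val_one, Matrix.cons_val_zero]
    field_simp
  · simp only [Fin.reduceFinMk, Matrix.cons_val]
    field_simp
    linear_combination (-rn n ^ 2) * hab + (a + b) * rn_sq_mul_cos_pi_div h2

theorem mem_hull_eEv_of_forall_ip_ωst_nonneg (hn : Even n) (h2 : 2 < n) {f : Fin 3 → ℝ}
    (hf : ∀ k, 0 ≤ ip f (ωst n k)) : f ∈ PointedCone.hull ℝ (range (eEv n)) := by
  obtain ⟨m, hm⟩ := hn
  have hn0 : 0 < n := by omega
  obtain ⟨j, hj⟩ := ((ωst_periodic hn0.ne').comp (ip f)).exists_max hn0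
  simp only [Function.comp_apply, ip_ωst] at hj hf
  set p := π / n with hp
  set A := 2 * π * j / n with hA
  have angle (d : ℤ) : 2 * π * ((j + d : ℤ) : ℝ) / n = A + d * (2 * p) := by
    rw [hA, hp]; push_cast; ring
  have hmax (d : ℤ) :
      f 0 * cos (A + d * (2 * p)) + f 1 * sin (A + d * (2 * p)) ≤ f 0 * cos A + f 1 * sin A := by
    have := hj (j + d)
    rw [angle] at this
    exact le_of_mul_le_mul_left (by linarith) (rn_pos h2)
  have hplus := hmax 1
  have hminus := hmax (-1)
  push_cast at hplus hminus
  rw [one_mul] at hplus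
  rw [neg_one_mul, ← sub_eq_add_neg] at hminus
  have hp2 : p < π / 2 := by
    rw [hp, div_lt_div_iff_of_pos_left pi_pos (by positivity) two_pos]
    exact_mod_cast h2
  obtain ⟨a, b, ha, hb, hx, hy, hab⟩ :=
    exists_nonneg_sector_decomposition (by positivity) hp2 hplus hminus
  have hopp : 0 ≤ f 2 - rn n * (f 0 * cos A + f 1 * sin A) := by
    have hπ : ((m : ℤ) : ℝ) * (2 * p) = π := by
      have : (m : ℝ) ≠ 0 := Nat.cast_ne_zero.2 (by omega)
      rw [hp, hm]; push_cast; field_simp; ring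
    have := hf (j + m)
    rw [angle, hπ, cos_add_pi, sin_add_pi] at this
    linarith
  have hr := rn_pos h2
  have mem (k : ℤ) : eEv n k ∈ PointedCone.hull ℝ (range (eEv n)) :=
    Submodule.subset_span (mem_range_self k)
  rw [eq_smul_eEv_add_smul_eEv_add_smul_uE h2 hx hy hab, ← eEv_add_eEv_add_half hm (by omega) j]
  refine add_mem (add_mem ?_ ?_) ?_
  · exact PointedCone.smul_mem _ (by positivity) (mem j)
  · exact PointedCone.smul_mem _ (by positivity) (mem (j + 1))
  · exact PointedCone.smul_mem _ hopp (add_mem (mem j) (mem (j + m)))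

theorem hull_eEv_le_dual (hn : Even n) (h2 : 2 < n) :
    PointedCone.hull ℝ (range (eEv n)) ≤
      PointedCone.dual (dotProductBilin ℝ ℝ) (range (ωst n)) := by
  rw [PointedCone.hull, Submodule.span_le]
  rintro _ ⟨j, rfl⟩ _ ⟨i, rfl⟩
  simpa [dotProduct_eq_ip] using ip_eEv_ωst_nonneg hn h2 j i

theorem dual_le_hull_eEv (hn : Even n) (h2 : 2 < n) :
    PointedCone.dual (dotProductBilin ℝ ℝ) (range (ωst n)) ≤
      PointedCone.hull ℝ (range (eEv n)) :=
  fun f hf => mem_hull_eEv_of_forall_ip_ωst_nonneg hn h2 fun k => by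
    simpa [dotProduct_eq_ip] using hf (mem_range_self k)

noncomputable def rotZₗ (θ : ℝ) : (Fin 3 → ℝ) →ₗ[ℝ] Fin 3 → ℝ where
  toFun := rotZ θ
  map_add' v w := by
    ext i
    fin_cases i <;>
      simp only [rotZ, Pi.add_apply, Fin.zero_eta, Fin.mk_one, Fin.reduceFinMk, Matrix.cons_val] <;>
      ring
  map_smul' c v := by
    ext i
    fin_cases i <;>
      simp only [rotZ, Pi.smul_apply, smul_eq_mul, RingHom.id_apply, Fin.zero_eta, Fin.mk_one,
        Fin.reduceFinMk, Matrix.cons_val] <;>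
      ring

theorem rotZ_ωst (i : ℤ) : rotZ (π / n) (ωst n i) = (2 : ℝ) • eEv n (i + 1) := by
  have : (2 * ((i + 1 : ℤ) : ℝ) - 1) * π / n = 2 * π * i / n + π / n := by push_cast; ring
  simp only [eEv, this]
  ext k
  fin_cases k <;>
    simp only [rotZ, ωst, cos_add, sin_add, Pi.smul_apply, smul_eq_mul, one_div, Fin.zero_eta,
      Fin.mk_one, Fin.reduceFinMk, Matrix.cons_val] <;>
    ring

theorem hull_eEv_eq_map_rotZ :
    PointedCone.hull ℝ (range (eEv n)) =
      (PointedCone.hull ℝ (range (ωst n))).map (rotZₗ (π / n)) := by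
  apply le_antisymm
  · rw [PointedCone.hull, Submodule.span_le]
    rintro _ ⟨j, rfl⟩
    refine PointedCone.mem_map.2 ⟨(1 / 2 : ℝ) • ωst n (j - 1),
      PointedCone.smul_mem _ (by norm_num) (Submodule.subset_span (mem_range_self _)), ?_⟩
    simp [rotZₗ, rotZ_ωst]
  · rw [PointedCone.map, Submodule.map_le_iff_le_comap, PointedCone.hull, Submodule.span_le]
    rintro _ ⟨i, rfl⟩
    change rotZ (π / n) (ωst n i) ∈ PointedCone.hull ℝ (range (eEv n))
    rw [rotZ_ωst]
    exact PointedCone.smul_mem _ (by norm_num) (Submodule.subset_span (mem_range_self _))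

end Polygon

theorem ngon_even_weak_self_duality (n : ℕ) (hn : Even n) (h4 : 4 ≤ n) :
    dualCone (stateCone n) = effectConeEv n ∧
    dualCone (stateCone n) = rotZ (π / n) '' stateCone n := by
  have hn0 : 0 < n := by omega
  have hdual : dualCone (stateCone n) = effectConeEv n := by
    rw [dualCone_eq_dual, stateCone_eq_hull hn0, PointedCone.dual_hull, effectConeEv_eq_hull hn0,
      (dual_le_hull_eEv hn (by omega)).antisymm (hull_eEv_le_dual hn (by omega))]
  refine ⟨hdual, ?_⟩
  rw [hdual, effectConeEv_eq_hull hn0, stateCone_eq_hull hn0, hull_eEv_eq_map_rotZ,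
    PointedCone.coe_map]
  rfl
end
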